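/- arXiv:1703.04790 — 2 statements merged into one kernel-verified Lean document; each statement's English description precedes it below -/
import Mathlib

section
/- The weighted least squares solution of the batch-mode regression equals the Kalman/UKF measurement update: for every a ∈ ℝ^n and c ∈ ℝ^m, (Hᵀ R⁻¹ H + P⁻¹)⁻¹ (Hᵀ R⁻¹ c + P⁻¹ a) = a + K (c − H a), where K = P Hᵀ (H P Hᵀ + R)⁻¹. -/
open Matrix

/-- The weighted least squares solution of the batch-mode regression equals the Kalman/UKF
measurement update: for every `a` and `c`,
`(Hᵀ R⁻¹ H + P⁻¹)⁻¹ (Hᵀ R⁻¹ c + P⁻¹ a) = a + K (c − H a)` with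
`K = P Hᵀ (H P Hᵀ + R)⁻¹`. -/
theorem wls_equals_kalman_update
    {m n : ℕ} (H : Matrix (Fin m) (Fin n) ℝ)
    (R : Matrix (Fin m) (Fin m) ℝ) (P : Matrix (Fin n) (Fin n) ℝ)
    (hR : R.PosDef) (hP : P.PosDef)
    (K : Matrix (Fin n) (Fin m) ℝ) (hK : K = P * Hᵀ * (H * P * Hᵀ + R)⁻¹) :
    ∀ (a : Fin n → ℝ) (c : Fin m → ℝ),
      (Hᵀ * R⁻¹ * H + P⁻¹)⁻¹.mulVec (Hᵀ.mulVec (R⁻¹.mulVec c) + P⁻¹.mulVec a) =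
        a + K.mulVec (c - H.mulVec a) := by
  have hT : ∀ {p q : ℕ} (A : Matrix (Fin p) (Fin q) ℝ), Aᴴ = Aᵀ := by
    intro p q A; ext i j; simp [conjTranspose_apply]
  have hS : (H * P * Hᵀ + R).PosDef := by
    have := (hP.posSemidef.mul_mul_conjTranspose_same H)
    rw [hT] at this
    exact Matrix.PosDef.posSemidef_add this hR
  have hM : (Hᵀ * R⁻¹ * H + P⁻¹).PosDef := by
    have := (hR.inv.posSemidef.conjTranspose_mul_mul_same H)
    rw [hT] at this
    rw [Matrix.mul_assoc] at this ⊢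
    exact Matrix.PosDef.posSemidef_add this hP.inv
  set M := Hᵀ * R⁻¹ * H + P⁻¹ with hMdef
  have hMK : M * K = Hᵀ * R⁻¹ := by
    rw [hK, hMdef]
    have h1 : (Hᵀ * R⁻¹ * H + P⁻¹) * (P * Hᵀ) = Hᵀ * R⁻¹ * (H * P * Hᵀ + R) := by
      rw [Matrix.add_mul, ← Matrix.mul_assoc P⁻¹ P Hᵀ,
        Matrix.nonsing_inv_mul _ (isUnit_iff_isUnit_det P |>.1 hP.isUnit), Matrix.one_mul,
        Matrix.mul_add, Matrix.mul_assoc Hᵀ R⁻¹ R,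
        Matrix.nonsing_inv_mul _ (isUnit_iff_isUnit_det R |>.1 hR.isUnit), Matrix.mul_one,
        Matrix.mul_assoc (Hᵀ * R⁻¹) H (P * Hᵀ), ← Matrix.mul_assoc H P Hᵀ]
    rw [← Matrix.mul_assoc _ (P * Hᵀ), h1, Matrix.mul_assoc,
      Matrix.mul_nonsing_inv _ (isUnit_iff_isUnit_det _ |>.1 hS.isUnit), Matrix.mul_one]
  intro a c
  have key : M.mulVec (a + K.mulVec (c - H.mulVec a)) =
      Hᵀ.mulVec (R⁻¹.mulVec c) + P⁻¹.mulVec a := by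
    rw [mulVec_add, mulVec_mulVec, hMK, mulVec_sub, mulVec_mulVec, hMdef, add_mulVec]
    rw [← mulVec_mulVec c Hᵀ R⁻¹]
    abel
  rw [← key, mulVec_mulVec, Matrix.nonsing_inv_mul _ (isUnit_iff_isUnit_det _ |>.1 hM.isUnit),
    one_mulVec]
end

section
/- The vector x̂ = a + P Hᵀ (H P Hᵀ + R)⁻¹ (c − H a) is the unique global minimizer over x ∈ ℝ^n of the weighted least squares objective of the batch-mode regression form, J(x) = (c − H x)ᵀ R⁻¹ (c − H x) + (a − x)ᵀ P⁻¹ (a − x). -/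
/-!
Setting `u = c - H x̂`, `v = a - x̂` and `S = H P Hᵀ + R`, one computes `u = R S⁻¹ (c - H a)` and
`v = -P Hᵀ S⁻¹ (c - H a)`, so `x̂` satisfies the normal equation `Hᵀ R⁻¹ u + P⁻¹ v = 0`.
Since `J` is quadratic with symmetric weights, the normal equation kills the linear term of
`J (x̂ + d) - J x̂`, leaving `(H d)ᵀ R⁻¹ (H d) + dᵀ P⁻¹ d`, which is positive for `d ≠ 0`.
-/

open Matrix

variable {ι κ K : Type*} [Fintype ι] [Fintype κ]

theorem Matrix.IsSymm.dotProduct_mulVec_comm [CommSemiring K] {A : Matrix ι ι K} (hA : A.IsSymm)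
    (u w : ι → K) : u ⬝ᵥ A *ᵥ w = w ⬝ᵥ A *ᵥ u := by
  simpa only [hA.eq] using dotProduct_transpose_mulVec A u w

theorem Matrix.IsSymm.sub_dotProduct_mulVec_sub [CommRing K] {A : Matrix ι ι K} (hA : A.IsSymm)
    (u w : ι → K) :
    (u - w) ⬝ᵥ A *ᵥ (u - w) = u ⬝ᵥ A *ᵥ u - 2 * (w ⬝ᵥ A *ᵥ u) + w ⬝ᵥ A *ᵥ w := by
  simp only [mulVec_sub, dotProduct_sub, sub_dotProduct, hA.dotProduct_mulVec_comm u w]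
  ring

def wlsObjective [CommRing K] (H : Matrix κ ι K) (W : Matrix κ κ K) (V : Matrix ι ι K)
    (a : ι → K) (c : κ → K) (x : ι → K) : K :=
  (c - H *ᵥ x) ⬝ᵥ W *ᵥ (c - H *ᵥ x) + (a - x) ⬝ᵥ V *ᵥ (a - x)

theorem wlsObjective_add [CommRing K] (H : Matrix κ ι K) {W : Matrix κ κ K} {V : Matrix ι ι K}
    (hW : W.IsSymm) (hV : V.IsSymm) (a : ι → K) (c : κ → K) (x d : ι → K) :
    wlsObjective H W V a c (x + d) =
      wlsObjective H W V a c x - 2 * (d ⬝ᵥ (Hᵀ *ᵥ W *ᵥ (c - H *ᵥ x) + V *ᵥ (a - x))) +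
        (H *ᵥ d ⬝ᵥ W *ᵥ (H *ᵥ d) + d ⬝ᵥ V *ᵥ d) := by
  have hcx : c - H *ᵥ (x + d) = (c - H *ᵥ x) - H *ᵥ d := by rw [mulVec_add]; abel
  have hax : a - (x + d) = (a - x) - d := by abel
  rw [wlsObjective, wlsObjective, hcx, hax, hW.sub_dotProduct_mulVec_sub,
    hV.sub_dotProduct_mulVec_sub, dotProduct_add, dotProduct_transpose_mulVec,
    dotProduct_comm (W *ᵥ _)]
  ring

theorem wlsObjective_lt_add_of_stationary (H : Matrix κ ι ℝ) {W : Matrix κ κ ℝ}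
    {V : Matrix ι ι ℝ} (hW : W.PosSemidef) (hV : V.PosDef) (a : ι → ℝ) (c : κ → ℝ) {x : ι → ℝ}
    (hx : Hᵀ *ᵥ W *ᵥ (c - H *ᵥ x) + V *ᵥ (a - x) = 0) {d : ι → ℝ} (hd : d ≠ 0) :
    wlsObjective H W V a c x < wlsObjective H W V a c (x + d) := by
  have hWd : 0 ≤ H *ᵥ d ⬝ᵥ W *ᵥ (H *ᵥ d) := by
    simpa using hW.dotProduct_mulVec_nonneg (H *ᵥ d)
  have hVd : 0 < d ⬝ᵥ V *ᵥ d := by simpa using hV.dotProduct_mulVec_pos hd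
  rw [wlsObjective_add H (isHermitian_iff_isSymm.mp hW.isHermitian)
    (isHermitian_iff_isSymm.mp hV.isHermitian), hx, dotProduct_zero, mul_zero, sub_zero]
  linarith

section KalmanGain

variable [CommRing K] (H : Matrix κ ι K) (R : Matrix κ κ K) (P : Matrix ι ι K) (a : ι → K)
  (c : κ → K)

theorem sub_mulVec_kalman_update [DecidableEq κ] (hS : IsUnit (H * P * Hᵀ + R).det) :
    c - H *ᵥ (a + (P * Hᵀ * (H * P * Hᵀ + R)⁻¹) *ᵥ (c - H *ᵥ a)) =
      (R * (H * P * Hᵀ + R)⁻¹) *ᵥ (c - H *ᵥ a) := by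
  set S := H * P * Hᵀ + R
  have hgain : H * (P * Hᵀ * S⁻¹) = 1 - R * S⁻¹ := by
    rw [eq_sub_iff_add_eq, ← Matrix.mul_assoc, ← Matrix.mul_assoc, ← Matrix.add_mul,
      mul_nonsing_inv S hS]
  rw [mulVec_add, mulVec_mulVec, hgain, sub_mulVec, one_mulVec]
  abel

theorem kalman_update_stationary [DecidableEq ι] [DecidableEq κ] (hR : IsUnit R.det)
    (hP : IsUnit P.det) (hS : IsUnit (H * P * Hᵀ + R).det) {x : ι → K}
    (hx : x = a + (P * Hᵀ * (H * P * Hᵀ + R)⁻¹) *ᵥ (c - H *ᵥ a)) :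
    Hᵀ *ᵥ R⁻¹ *ᵥ (c - H *ᵥ x) + P⁻¹ *ᵥ (a - x) = 0 := by
  have hv : a - x = -((P * Hᵀ * (H * P * Hᵀ + R)⁻¹) *ᵥ (c - H *ᵥ a)) := by rw [hx]; abel
  rw [hv, hx, sub_mulVec_kalman_update H R P a c hS, mulVec_neg, mulVec_mulVec, mulVec_mulVec,
    mulVec_mulVec, Matrix.mul_assoc Hᵀ, nonsing_inv_mul_cancel_left R _ hR, Matrix.mul_assoc P,
    nonsing_inv_mul_cancel_left P _ hP, add_neg_cancel]

end KalmanGain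

/-- `x̂ = a + P Hᵀ (H P Hᵀ + R)⁻¹ (c − H a)` is the unique global minimizer of the
weighted least squares objective of the batch-mode regression form
`J(x) = (c − H x)ᵀ R⁻¹ (c − H x) + (a − x)ᵀ P⁻¹ (a − x)`. -/
theorem batch_mode_wls_unique_minimizer
    {m n : ℕ} (H : Matrix (Fin m) (Fin n) ℝ)
    (R : Matrix (Fin m) (Fin m) ℝ) (P : Matrix (Fin n) (Fin n) ℝ)
    (hR : R.PosDef) (hP : P.PosDef)
    (a : Fin n → ℝ) (c : Fin m → ℝ)
    (J : (Fin n → ℝ) → ℝ)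
    (hJ : ∀ x, J x = (c - H.mulVec x) ⬝ᵥ R⁻¹.mulVec (c - H.mulVec x) +
        (a - x) ⬝ᵥ P⁻¹.mulVec (a - x))
    (xhat : Fin n → ℝ)
    (hxhat : xhat = a + (P * Hᵀ * (H * P * Hᵀ + R)⁻¹).mulVec (c - H.mulVec a)) :
    ∀ x : Fin n → ℝ, x ≠ xhat → J xhat < J x := by
  intro x hx
  have hS : (H * P * Hᵀ + R).PosDef := by
    simpa using hR.posSemidef_add (hP.posSemidef.mul_mul_conjTranspose_same H)
  have hstat := kalman_update_stationary H R P a c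
    (isUnit_iff_isUnit_det R |>.mp hR.isUnit) (isUnit_iff_isUnit_det P |>.mp hP.isUnit)
    (isUnit_iff_isUnit_det _ |>.mp hS.isUnit) hxhat
  have hJ' : J = wlsObjective H R⁻¹ P⁻¹ a c := funext hJ
  rw [hJ', ← add_sub_cancel xhat x]
  exact wlsObjective_lt_add_of_stationary H hR.inv.posSemidef hP.inv a c hstat (sub_ne_zero.mpr hx)
end
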